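/- arXiv:2412.16890 — 6 statements merged into one kernel-verified Lean document; each statement's English description precedes it below -/
import Mathlib

section
/- For r ≥ 0, let w₀(r) := η₀(r) + 2r²/(1+r²) - η₀(r)²/2 + ((1-r²)/(1+r²)) ∫₁^{1+r²} (ln t)/(1-t) dt, where η₀(r) = -ln(1+r²). Then w₀ is a radial solution of -Δw₀ = 4e^{2η₀}(η₀ + η₀² + 2w₀) on ℝ² with w₀(0) = 0 and w₀'(0) = 0. -/
open MeasureTheory Real

noncomputable section

abbrev E2 := EuclideanSpace ℝ (Fin 2)

/-- The Euclidean Laplacian of `f : ℝ² → ℝ`, as sum of second directional derivatives. -/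
def lap (f : E2 → ℝ) (x : E2) : ℝ :=
  ∑ i : Fin 2, deriv (deriv (fun t : ℝ => f (x + t • (EuclideanSpace.single i (1:ℝ))))) 0

/-- The standard Liouville bubble `η₀(x) = -ln(1+|x|²)`. -/
def eta0 (x : E2) : ℝ := -Real.log (1 + ‖x‖^2)

/-- The radial profile `η₀(r) = -ln(1+r²)`. -/
def eta0r (r : ℝ) : ℝ := -Real.log (1 + r^2)

/-- The radial function `w₀`. -/
def W0 (r : ℝ) : ℝ :=
  eta0r r + 2*r^2/(1+r^2) - (eta0r r)^2/2
    + ((1-r^2)/(1+r^2)) * ∫ t in (1:ℝ)..(1+r^2), Real.log t / (1-t)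

open Set Filter Topology

/-! Writing `w₀(r) = F(r²)`, the Laplacian of `x ↦ F(|x|²)` on `ℝ²` is `4 (s F''(s) + F'(s))` at
`s = |x|²`, so the equation reduces to an identity between explicit functions of `s`, checked by
differentiating. The integrand `log t / (1 - t)` has a removable singularity at `t = 1`: it is
`-dslope log 1 t`, which is analytic at `1` because `log` is, so `F` is `C²` on `s > -1`. -/

lemma dslope_log_one_of_ne {t : ℝ} (ht : t ≠ 1) : dslope log 1 t = log t / (t - 1) := by
  rw [dslope_of_ne _ ht, slope_def_field, log_one, sub_zero]

lemma dslope_log_one_self : dslope log 1 1 = 1 := by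
  rw [dslope_same, deriv_log, inv_one]

lemma differentiableAt_dslope_log_one {t : ℝ} (ht : 0 < t) :
    DifferentiableAt ℝ (dslope log 1) t := by
  rcases eq_or_ne t 1 with rfl | ht1
  · obtain ⟨p, hp⟩ := analyticAt_log one_pos
    exact hp.has_fpower_series_dslope_fslope.differentiableAt
  · exact (differentiableAt_dslope_of_ne ht1).2 (differentiableAt_log ht.ne')

lemma continuousOn_dslope_log_one : ContinuousOn (dslope log 1) (Ioi 0) :=
  fun _ ht => (differentiableAt_dslope_log_one ht).continuousAt.continuousWithinAt

lemma deriv_dslope_log_one {t : ℝ} (ht : 0 < t) (ht1 : t ≠ 1) :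
    deriv (dslope log 1) t = (t⁻¹ * (t - 1) - log t) / (t - 1) ^ 2 := by
  have hquot :
      HasDerivAt (fun u => log u / (u - 1)) ((t⁻¹ * (t - 1) - log t * 1) / (t - 1) ^ 2) t :=
    (hasDerivAt_log ht.ne').div ((hasDerivAt_id t).sub_const 1) (sub_ne_zero.2 ht1)
  rw [mul_one] at hquot
  refine (hquot.congr_of_eventuallyEq ?_).deriv
  filter_upwards [eventually_ne_nhds ht1] with u hu using dslope_log_one_of_ne hu

lemma hasDerivAt_integral_dslope_log_one {x : ℝ} (hx : 0 < x) :
    HasDerivAt (fun y => ∫ t in (1:ℝ)..y, dslope log 1 t) (dslope log 1 x) x := by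
  have hsub : uIcc 1 x ⊆ Ioi 0 := fun u hu => by
    rcases mem_uIcc.1 hu with ⟨h, _⟩ | ⟨h, _⟩ <;> simp only [mem_Ioi] <;> linarith
  exact intervalIntegral.integral_hasDerivAt_right
    ((continuousOn_dslope_log_one.mono hsub).intervalIntegrable)
    (continuousOn_dslope_log_one.stronglyMeasurableAtFilter isOpen_Ioi x hx)
    (continuousOn_dslope_log_one.continuousAt (Ioi_mem_nhds hx))

lemma integral_log_div_one_sub (x : ℝ) :
    ∫ t in (1:ℝ)..x, log t / (1 - t) = -∫ t in (1:ℝ)..x, dslope log 1 t := by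
  rw [← intervalIntegral.integral_neg]
  refine intervalIntegral.integral_congr_ae ?_
  filter_upwards [Measure.ae_ne volume 1] with t ht _
  rw [dslope_log_one_of_ne ht, ← neg_div_neg_eq, neg_sub, neg_div]

def W0Sq (s : ℝ) : ℝ :=
  -log (1 + s) + 2 * s / (1 + s) - log (1 + s) ^ 2 / 2
    - (1 - s) / (1 + s) * ∫ t in (1:ℝ)..1 + s, dslope log 1 t

def W0SqDeriv (s : ℝ) : ℝ :=
  -1 / (1 + s) + 2 / (1 + s) ^ 2 - log (1 + s) / (1 + s)
    + 2 / (1 + s) ^ 2 * (∫ t in (1:ℝ)..1 + s, dslope log 1 t)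
    - (1 - s) / (1 + s) * dslope log 1 (1 + s)

def W0SqDeriv2 (s : ℝ) : ℝ :=
  1 / (1 + s) ^ 2 - 4 / (1 + s) ^ 3 + (log (1 + s) - 1) / (1 + s) ^ 2
    - 4 / (1 + s) ^ 3 * (∫ t in (1:ℝ)..1 + s, dslope log 1 t)
    + 4 / (1 + s) ^ 2 * dslope log 1 (1 + s)
    - (1 - s) / (1 + s) * deriv (dslope log 1) (1 + s)

lemma W0_eq_W0Sq (r : ℝ) : W0 r = W0Sq (r ^ 2) := by
  rw [W0, eta0r, integral_log_div_one_sub, W0Sq]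
  ring

lemma hasDerivAt_integral_dslope_log_one_add {s : ℝ} (hs : -1 < s) :
    HasDerivAt (fun u => ∫ t in (1:ℝ)..1 + u, dslope log 1 t) (dslope log 1 (1 + s)) s :=
  (hasDerivAt_integral_dslope_log_one (by linarith)).comp_const_add 1 s

lemma hasDerivAt_W0Sq {s : ℝ} (hs : -1 < s) : HasDerivAt W0Sq (W0SqDeriv s) s := by
  have h1 : 1 + s ≠ 0 := by linarith
  have hL : HasDerivAt (fun u => log (1 + u)) (1 + s)⁻¹ s :=
    (hasDerivAt_log h1).comp_const_add 1 s
  have hA : HasDerivAt (fun u => 1 + u) 1 s := (hasDerivAt_id' s).const_add 1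
  have H := ((hL.neg.add (((hasDerivAt_id' s).const_mul 2).div hA h1)).sub
    ((hL.pow 2).div_const 2)).sub
    ((((hasDerivAt_id' s).const_sub 1).div hA h1).mul (hasDerivAt_integral_dslope_log_one_add hs))
  refine H.congr_deriv ?_
  simp only [W0SqDeriv, Pi.div_apply]
  field_simp
  ring

lemma hasDerivAt_W0SqDeriv {s : ℝ} (hs : -1 < s) : HasDerivAt W0SqDeriv (W0SqDeriv2 s) s := by
  have h1 : 1 + s ≠ 0 := by linarith
  have hL : HasDerivAt (fun u => log (1 + u)) (1 + s)⁻¹ s :=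
    (hasDerivAt_log h1).comp_const_add 1 s
  have hA : HasDerivAt (fun u => 1 + u) 1 s := (hasDerivAt_id' s).const_add 1
  have hA2 : HasDerivAt (fun u => (1 + u) ^ 2) (2 * (1 + s)) s :=
    (hA.pow 2).congr_deriv (by push_cast; ring)
  have hG : HasDerivAt (fun u => dslope log 1 (1 + u)) (deriv (dslope log 1) (1 + s)) s :=
    (differentiableAt_dslope_log_one (by linarith)).hasDerivAt.comp_const_add 1 s
  have H := ((((hasDerivAt_const s (-1 : ℝ)).div hA h1).add
    ((hasDerivAt_const s (2 : ℝ)).div hA2 (pow_ne_zero 2 h1))).sub (hL.div hA h1)).add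
    (((hasDerivAt_const s (2 : ℝ)).div hA2 (pow_ne_zero 2 h1)).mul
      (hasDerivAt_integral_dslope_log_one_add hs)) |>.sub
    ((((hasDerivAt_id' s).const_sub 1).div hA h1).mul hG)
  refine H.congr_deriv ?_
  simp only [W0SqDeriv2, Pi.div_apply]
  field_simp
  ring

section RadialSecondDeriv

variable {E : Type*} [NormedAddCommGroup E] [InnerProductSpace ℝ E]

lemma norm_add_smul_sq (x v : E) (t : ℝ) :
    ‖x + t • v‖ ^ 2 = ‖x‖ ^ 2 + 2 * inner ℝ x v * t + ‖v‖ ^ 2 * t ^ 2 := by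
  rw [norm_add_sq_real, real_inner_smul_right, norm_smul, mul_pow, Real.norm_eq_abs, sq_abs]
  ring

lemma hasDerivAt_norm_add_smul_sq (x v : E) (t : ℝ) :
    HasDerivAt (fun t : ℝ => ‖x + t • v‖ ^ 2) (2 * inner ℝ x v + 2 * ‖v‖ ^ 2 * t) t := by
  simp_rw [norm_add_smul_sq]
  exact ((((hasDerivAt_id' t).const_mul (2 * inner ℝ x v)).const_add (‖x‖ ^ 2)).add
    ((hasDerivAt_pow 2 t).const_mul (‖v‖ ^ 2))).congr_deriv (by push_cast; ring)

lemma deriv_deriv_comp_norm_add_smul_sq {F F' F'' : ℝ → ℝ}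
    (hF : ∀ s, 0 ≤ s → HasDerivAt F (F' s) s) (hF' : ∀ s, 0 ≤ s → HasDerivAt F' (F'' s) s)
    (x v : E) :
    deriv (deriv fun t : ℝ => F (‖x + t • v‖ ^ 2)) 0
      = F'' (‖x‖ ^ 2) * (2 * inner ℝ x v) ^ 2 + F' (‖x‖ ^ 2) * (2 * ‖v‖ ^ 2) := by
  have hderiv : deriv (fun t : ℝ => F (‖x + t • v‖ ^ 2))
      = fun t => F' (‖x + t • v‖ ^ 2) * (2 * inner ℝ x v + 2 * ‖v‖ ^ 2 * t) := by
    funext t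
    exact ((hF (‖x + t • v‖ ^ 2) (sq_nonneg _)).comp t (hasDerivAt_norm_add_smul_sq x v t)).deriv
  have hlin : HasDerivAt (fun t : ℝ => 2 * inner ℝ x v + 2 * ‖v‖ ^ 2 * t) (2 * ‖v‖ ^ 2) 0 := by
    simpa using ((hasDerivAt_id (0:ℝ)).const_mul (2 * ‖v‖ ^ 2)).const_add (2 * inner ℝ x v)
  have h2 : HasDerivAt (fun t : ℝ => F' (‖x + t • v‖ ^ 2) * (2 * inner ℝ x v + 2 * ‖v‖ ^ 2 * t))
      (F'' (‖x + (0:ℝ) • v‖ ^ 2) * (2 * inner ℝ x v + 2 * ‖v‖ ^ 2 * 0)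
          * (2 * inner ℝ x v + 2 * ‖v‖ ^ 2 * 0) + F' (‖x + (0:ℝ) • v‖ ^ 2) * (2 * ‖v‖ ^ 2)) 0 :=
    ((hF' (‖x + (0:ℝ) • v‖ ^ 2) (sq_nonneg _)).comp 0 (hasDerivAt_norm_add_smul_sq x v 0)).mul hlin
  rw [hderiv, h2.deriv]
  simp only [zero_smul, add_zero, mul_zero]
  ring

end RadialSecondDeriv

lemma lap_comp_norm_sq {F F' F'' : ℝ → ℝ} (hF : ∀ s, 0 ≤ s → HasDerivAt F (F' s) s)
    (hF' : ∀ s, 0 ≤ s → HasDerivAt F' (F'' s) s) (x : E2) :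
    lap (fun y => F (‖y‖ ^ 2)) x = 4 * (‖x‖ ^ 2 * F'' (‖x‖ ^ 2) + F' (‖x‖ ^ 2)) := by
  have hsum : x 0 ^ 2 + x 1 ^ 2 = ‖x‖ ^ 2 := by
    rw [EuclideanSpace.norm_eq, sq_sqrt (by positivity)]
    simp [Fin.sum_univ_two]
  simp only [lap, deriv_deriv_comp_norm_add_smul_sq hF hF', Fin.sum_univ_two,
    EuclideanSpace.inner_single_right, PiLp.norm_single]
  rw [← hsum]
  simp
  ring

lemma W0Sq_ode {s : ℝ} (hs : 0 ≤ s) :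
    s * W0SqDeriv2 s + W0SqDeriv s
      = -(-log (1 + s) + log (1 + s) ^ 2 + 2 * W0Sq s) / (1 + s) ^ 2 := by
  rcases hs.eq_or_lt with rfl | hs
  · -- the unknown value `deriv (dslope log 1) 1` is multiplied by `s = 0`
    rw [W0SqDeriv, W0Sq, add_zero, dslope_log_one_self]
    norm_num
  · have h1 : 1 + s ≠ 1 := by linarith
    have hsub : 1 + s - 1 = s := by ring
    rw [W0SqDeriv2, W0SqDeriv, W0Sq, dslope_log_one_of_ne h1,
      deriv_dslope_log_one (by linarith) h1, hsub]
    field_simp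
    ring

theorem stmt2 :
    (∀ x : E2, -lap (fun y => W0 ‖y‖) x
        = 4 * Real.exp (2 * eta0 x) * (eta0 x + (eta0 x)^2 + 2 * W0 ‖x‖))
      ∧ W0 0 = 0 ∧ deriv W0 0 = 0 := by
  have hW0 : W0 = fun r => W0Sq (r ^ 2) := funext W0_eq_W0Sq
  refine ⟨fun x => ?_, ?_, ?_⟩
  · have hexp : exp (2 * eta0 x) = 1 / (1 + ‖x‖ ^ 2) ^ 2 := by
      rw [eta0, mul_neg, exp_neg, ← Nat.cast_ofNat, ← log_pow, exp_log (by positivity), one_div]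
    rw [hW0, lap_comp_norm_sq (fun s hs => hasDerivAt_W0Sq (by linarith))
      (fun s hs => hasDerivAt_W0SqDeriv (by linarith)) x, W0Sq_ode (sq_nonneg _), hexp, eta0]
    ring
  · simp [W0, eta0r]
  · rw [hW0]
    exact ((hasDerivAt_W0Sq (by norm_num)).comp 0 (hasDerivAt_pow 2 (0 : ℝ))).deriv.trans
      (by simp)
end
end

section
/- The derivative of w₀ satisfies w₀'(r) = 2r(1-r²)/(1+r²)² - 2ln(1+r²)/(r(1+r²)) - (4r/(1+r²)²) ∫₁^{1+r²} (ln t)/(1-t) dt for r > 0, and lim_{r→0⁺} w₀'(r) = 0. -/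
open MeasureTheory Real

noncomputable section

lemma fbound {t : ℝ} (ht : 1 < t) : ‖Real.log t / (1 - t)‖ ≤ 1 := by
  have hlog := Real.log_le_sub_one_of_pos (by linarith : (0:ℝ) < t)
  have h0 : Real.log t ≥ 0 := Real.log_nonneg ht.le
  rw [Real.norm_eq_abs, abs_div, abs_of_nonneg h0, abs_of_nonpos (by linarith : 1 - t ≤ 0),
    div_le_one (by linarith)]
  linarith

lemma fmeas : Measurable (fun t : ℝ => Real.log t / (1 - t)) :=
  Real.measurable_log.div (measurable_const.sub measurable_id)

lemma fInt {x : ℝ} (hx : 1 ≤ x) :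
    IntervalIntegrable (fun t : ℝ => Real.log t / (1 - t)) volume 1 x := by
  rw [intervalIntegrable_iff_integrableOn_Ioc_of_le hx]
  apply Measure.integrableOn_of_bounded (M := 1) measure_Ioc_lt_top.ne
    fmeas.aestronglyMeasurable
  exact ae_restrict_of_forall_mem measurableSet_Ioc fun t ht => fbound ht.1

lemma hasDeriv (r : ℝ) (hr : 0 < r) :
    HasDerivAt W0
      (-((1+r^2)⁻¹ * (2*r)) + (4*r*(1+r^2) - 2*r^2*(2*r))/(1+r^2)^2
        - (2 * (-Real.log (1+r^2))^1 * -((1+r^2)⁻¹ * (2*r)))/2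
        + (((-(2*r))*(1+r^2) - (1-r^2)*(2*r))/(1+r^2)^2
            * (∫ t in (1:ℝ)..(1+r^2), Real.log t / (1-t))
          + (1-r^2)/(1+r^2) * (Real.log (1+r^2)/(1-(1+r^2)) * (2*r)))) r := by
  have h1r2 : (0:ℝ) < 1 + r^2 := by positivity
  have hq : HasDerivAt (fun r : ℝ => 1 + r^2) (2*r) r := by
    simpa using (hasDerivAt_pow 2 r).const_add 1
  have hL : HasDerivAt (fun r : ℝ => Real.log (1+r^2)) ((1+r^2)⁻¹ * (2*r)) r :=
    by have := (Real.hasDerivAt_log h1r2.ne').comp r hq; exact this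
  have hEta : HasDerivAt (fun r : ℝ => -Real.log (1+r^2)) (-((1+r^2)⁻¹ * (2*r))) r := hL.neg
  have hnum : HasDerivAt (fun r : ℝ => 2*r^2) (4*r) r := by
    have := (hasDerivAt_pow 2 r).const_mul (2:ℝ)
    simpa [mul_comm, mul_assoc, mul_left_comm] using this.congr_deriv (by ring)
  have h2 : HasDerivAt (fun r : ℝ => 2*r^2/(1+r^2))
      ((4*r*(1+r^2) - 2*r^2*(2*r))/(1+r^2)^2) r := hnum.div hq h1r2.ne'
  have h3 : HasDerivAt (fun r : ℝ => (-Real.log (1+r^2))^2/2)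
      ((2 * (-Real.log (1+r^2))^1 * -((1+r^2)⁻¹ * (2*r)))/2) r :=
    (hEta.pow 2).div_const 2
  have hnum2 : HasDerivAt (fun r : ℝ => 1 - r^2) (-(2*r)) r := by
    simpa using (hasDerivAt_pow 2 r).const_sub 1
  have hquot : HasDerivAt (fun r : ℝ => (1-r^2)/(1+r^2))
      (((-(2*r))*(1+r^2) - (1-r^2)*(2*r))/(1+r^2)^2) r := hnum2.div hq h1r2.ne'
  have hcont : ContinuousAt (fun t : ℝ => Real.log t / (1 - t)) (1+r^2) := by
    apply ContinuousAt.div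
    · exact Real.continuousAt_log h1r2.ne'
    · fun_prop
    · nlinarith
  have hIx : HasDerivAt (fun x : ℝ => ∫ t in (1:ℝ)..x, Real.log t / (1-t))
      (Real.log (1+r^2)/(1-(1+r^2))) (1+r^2) :=
    intervalIntegral.integral_hasDerivAt_right (fInt (by nlinarith))
      fmeas.stronglyMeasurable.stronglyMeasurableAtFilter hcont
  have hI : HasDerivAt (fun r : ℝ => ∫ t in (1:ℝ)..(1+r^2), Real.log t / (1-t))
      (Real.log (1+r^2)/(1-(1+r^2)) * (2*r)) r := by have := hIx.comp r hq; exact this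
  have hProd := hquot.mul hI
  have hW := ((hEta.add h2).sub h3).add hProd
  unfold W0 eta0r
  exact hW

theorem stmt5 :
    (∀ r : ℝ, 0 < r →
      deriv W0 r = 2*r*(1-r^2)/(1+r^2)^2 - 2*Real.log (1+r^2)/(r*(1+r^2))
        - (4*r/(1+r^2)^2) * ∫ t in (1:ℝ)..(1+r^2), Real.log t / (1-t))
    ∧ Filter.Tendsto (deriv W0) (nhdsWithin 0 (Set.Ioi 0)) (nhds 0) := by
  have key : ∀ r : ℝ, 0 < r →
      deriv W0 r = 2*r*(1-r^2)/(1+r^2)^2 - 2*Real.log (1+r^2)/(r*(1+r^2))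
        - (4*r/(1+r^2)^2) * ∫ t in (1:ℝ)..(1+r^2), Real.log t / (1-t) := by
    intro r hr
    rw [(hasDeriv r hr).deriv]
    have h1r2 : (0:ℝ) < 1 + r^2 := by positivity
    have hsub : (1:ℝ) - (1+r^2) = -r^2 := by ring
    rw [hsub]
    generalize (∫ t in (1:ℝ)..(1+r^2), Real.log t / (1-t)) = c
    have hrne : r ≠ 0 := hr.ne'
    field_simp
    ring
  refine ⟨key, ?_⟩
  have hsq : Filter.Tendsto (fun r : ℝ => 8*r) (nhdsWithin 0 (Set.Ioi 0)) (nhds 0) := by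
    have : Filter.Tendsto (fun r : ℝ => 8*r) (nhds 0) (nhds (8*0)) :=
      (continuous_const.mul continuous_id).tendsto 0
    simpa using this.mono_left nhdsWithin_le_nhds
  apply squeeze_zero_norm' ?_ hsq
  filter_upwards [Ioo_mem_nhdsGT_of_mem (Set.left_mem_Ico.2 one_pos)] with r hr1
  obtain ⟨hr, hrlt⟩ := hr1
  rw [key r hr]
  have h1r2 : (0:ℝ) < 1 + r^2 := by positivity
  have hlog0 : 0 ≤ Real.log (1+r^2) := Real.log_nonneg (by nlinarith)
  have hlog1 : Real.log (1+r^2) ≤ r^2 := by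
    have := Real.log_le_sub_one_of_pos h1r2
    linarith
  have hIbnd : ‖∫ t in (1:ℝ)..(1+r^2), Real.log t / (1-t)‖ ≤ r^2 := by
    have := intervalIntegral.norm_integral_le_of_norm_le_const (C := 1)
      (f := fun t : ℝ => Real.log t / (1-t)) (a := 1) (b := 1+r^2)
      (fun x hx => by
        rw [Set.uIoc_of_le (by nlinarith : (1:ℝ) ≤ 1+r^2)] at hx
        exact fbound hx.1)
    calc ‖∫ t in (1:ℝ)..(1+r^2), Real.log t / (1-t)‖ ≤ 1 * |1+r^2 - 1| := this
      _ = r^2 := by rw [one_mul]; rw [show (1:ℝ)+r^2-1 = r^2 by ring, abs_of_nonneg (by positivity)]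
  -- bound each of three terms
  have hA : |2*r*(1-r^2)/(1+r^2)^2| ≤ 2*r := by
    rw [abs_div, abs_of_nonneg (by positivity : (0:ℝ) ≤ (1+r^2)^2),
      div_le_iff₀ (by positivity)]
    rw [abs_mul]
    have h1 : |2*r| = 2*r := abs_of_nonneg (by positivity)
    have h2 : |1-r^2| ≤ (1+r^2) := by
      rw [abs_le]; constructor <;> nlinarith
    rw [h1]
    have h3 : |1-r^2| ≤ (1+r^2)^2 := by nlinarith
    nlinarith [hr.le]
  have hB : |2*Real.log (1+r^2)/(r*(1+r^2))| ≤ 2*r := by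
    rw [abs_of_nonneg (by positivity), div_le_iff₀ (by positivity)]
    nlinarith
  have hC : |(4*r/(1+r^2)^2) * ∫ t in (1:ℝ)..(1+r^2), Real.log t / (1-t)| ≤ 4*r := by
    rw [abs_mul]
    have h1 : |4*r/(1+r^2)^2| ≤ 4*r := by
      rw [abs_of_nonneg (by positivity)]
      apply div_le_self (by positivity)
      nlinarith
    calc |4*r/(1+r^2)^2| * |∫ t in (1:ℝ)..(1+r^2), Real.log t / (1-t)|
        ≤ (4*r) * r^2 := by
          apply mul_le_mul h1 hIbnd (abs_nonneg _) (by positivity)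
      _ ≤ 4*r := by nlinarith
  calc ‖2*r*(1-r^2)/(1+r^2)^2 - 2*Real.log (1+r^2)/(r*(1+r^2))
        - (4*r/(1+r^2)^2) * ∫ t in (1:ℝ)..(1+r^2), Real.log t / (1-t)‖
      ≤ ‖2*r*(1-r^2)/(1+r^2)^2 - 2*Real.log (1+r^2)/(r*(1+r^2))‖
        + ‖(4*r/(1+r^2)^2) * ∫ t in (1:ℝ)..(1+r^2), Real.log t / (1-t)‖ := norm_sub_le _ _
    _ ≤ (‖2*r*(1-r^2)/(1+r^2)^2‖ + ‖2*Real.log (1+r^2)/(r*(1+r^2))‖)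
        + ‖(4*r/(1+r^2)^2) * ∫ t in (1:ℝ)..(1+r^2), Real.log t / (1-t)‖ := by
          gcongr; exact norm_sub_le _ _
    _ ≤ (2*r + 2*r) + 4*r := by
          rw [Real.norm_eq_abs, Real.norm_eq_abs, Real.norm_eq_abs]
          linarith [hA, hB, hC]
    _ = 8*r := by ring
end
end

section
/- ∫_{ℝ²} ((|x|²-1)/(1+|x|²)³) · η₀(x)³ dx = -21π/4, where η₀(x) = -ln(1+|x|²). -/
/-!
In polar coordinates the integral is `2π ∫₀^∞ r (r² - 1)/(1 + r²)³ (-log (1 + r²))³ dr`.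
The substitution `t = log (1 + r²)`, i.e. `1 + r² = eᵗ`, turns the radial integral into the
Gamma integrals `∫₀^∞ t³ e^{-2t} dt - ½ ∫₀^∞ t³ e^{-t} dt = 3!/2⁴ - 3!/2 = -21/8`.
-/

open MeasureTheory Real

noncomputable section

open Set
open scoped Nat

theorem integral_fun_norm_euclideanSpace_fin_two {F : Type*} [NormedAddCommGroup F]
    [NormedSpace ℝ F] (f : ℝ → F) :
    ∫ x : EuclideanSpace ℝ (Fin 2), f ‖x‖ =
      (2 * π) • ∫ r in Ioi (0 : ℝ), r • f r := by
  rw [integral_fun_norm_addHaar, finrank_euclideanSpace_fin, measureReal_def,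
    EuclideanSpace.volume_ball_fin_two]
  simp [pi_nonneg, mul_smul, ofNat_smul_eq_nsmul]

theorem integrableOn_pow_mul_exp_neg_mul_Ioi (n : ℕ) {c : ℝ} (hc : 0 < c) :
    IntegrableOn (fun t : ℝ ↦ t ^ n * exp (-(c * t))) (Ioi 0) := by
  have hn : (-1 : ℝ) < n := by linarith [n.cast_nonneg (α := ℝ)]
  refine (integrableOn_rpow_mul_exp_neg_mul_rpow (p := 1) hn one_pos hc).congr_fun
    (fun t _ ↦ ?_) measurableSet_Ioi
  simp [rpow_natCast]

theorem integral_pow_mul_exp_neg_mul_Ioi (n : ℕ) {c : ℝ} (hc : 0 < c) :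
    ∫ t in Ioi (0 : ℝ), t ^ n * exp (-(c * t)) = n ! / c ^ (n + 1) := by
  have h := integral_rpow_mul_exp_neg_mul_Ioi (a := n + 1) (by positivity) hc
  simp only [add_sub_cancel_right, rpow_natCast] at h
  rw [h, Gamma_nat_eq_factorial, ← Nat.cast_add_one, rpow_natCast, one_div_pow,
    one_div_mul_eq_div]

theorem image_log_one_add_sq_Ioi : (fun r : ℝ ↦ log (1 + r ^ 2)) '' Ioi 0 = Ioi 0 := by
  ext t
  constructor
  · rintro ⟨r, hr, rfl⟩
    exact log_pos (by simp at hr; nlinarith)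
  · intro ht
    have ht : 0 < t := ht
    refine ⟨√(exp t - 1), sqrt_pos.2 (by simpa using ht), ?_⟩
    show log (1 + √(exp t - 1) ^ 2) = t
    rw [sq_sqrt (by linarith [add_one_le_exp t]), add_sub_cancel, log_exp]

theorem injOn_log_one_add_sq : InjOn (fun r : ℝ ↦ log (1 + r ^ 2)) (Ioi 0) := by
  intro a ha b hb hab
  have : 1 + a ^ 2 = 1 + b ^ 2 := log_injOn_pos (by simp; positivity) (by simp; positivity) hab
  exact (pow_left_inj₀ ha.le hb.le two_ne_zero).1 (by linarith)

theorem integral_comp_log_one_add_sq_Ioi {F : Type*} [NormedAddCommGroup F]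
    [NormedSpace ℝ F] (g : ℝ → F) :
    ∫ r in Ioi (0 : ℝ), (2 * r / (1 + r ^ 2)) • g (log (1 + r ^ 2)) =
      ∫ t in Ioi (0 : ℝ), g t := by
  have hderiv : ∀ r ∈ Ioi (0 : ℝ), HasDerivWithinAt (fun r : ℝ ↦ log (1 + r ^ 2))
      (2 * r / (1 + r ^ 2)) (Ioi 0) r := fun r _ ↦ by
    simpa using (((hasDerivAt_pow 2 r).const_add 1).log (by positivity)).hasDerivWithinAt
  conv_rhs => rw [← image_log_one_add_sq_Ioi]
  rw [integral_image_eq_integral_abs_deriv_smul measurableSet_Ioi hderiv injOn_log_one_add_sq]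
  refine setIntegral_congr_fun measurableSet_Ioi fun r hr ↦ ?_
  have hr : (0 : ℝ) < r := hr
  rw [abs_of_pos (by positivity)]

def radialIntegrand (r : ℝ) : ℝ := (r ^ 2 - 1) / (1 + r ^ 2) ^ 3 * (-log (1 + r ^ 2)) ^ 3

theorem integral_Ioi_mul_radialIntegrand :
    ∫ r in Ioi (0 : ℝ), r * radialIntegrand r = -(21 / 8) := by
  have hsubst : ∀ r : ℝ, r * radialIntegrand r =
      (2 * r / (1 + r ^ 2)) • (log (1 + r ^ 2) ^ 3 * exp (-(2 * log (1 + r ^ 2))) -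
        log (1 + r ^ 2) ^ 3 * exp (-(1 * log (1 + r ^ 2))) / 2) := fun r ↦ by
    have hu : 0 < 1 + r ^ 2 := by positivity
    have hexp2 : exp (-(2 * log (1 + r ^ 2))) = ((1 + r ^ 2) ^ 2)⁻¹ := by
      rw [exp_neg, ← log_rpow hu, exp_log (by positivity), rpow_two]
    rw [radialIntegrand, smul_eq_mul, hexp2, one_mul, exp_neg, exp_log hu]
    field_simp
    ring
  simp_rw [hsubst]
  rw [integral_comp_log_one_add_sq_Ioi
      fun t ↦ t ^ 3 * exp (-(2 * t)) - t ^ 3 * exp (-(1 * t)) / 2,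
    integral_sub (integrableOn_pow_mul_exp_neg_mul_Ioi 3 two_pos)
      ((integrableOn_pow_mul_exp_neg_mul_Ioi 3 one_pos).div_const 2),
    integral_div, integral_pow_mul_exp_neg_mul_Ioi 3 two_pos,
    integral_pow_mul_exp_neg_mul_Ioi 3 one_pos]
  norm_num [Nat.factorial]

theorem stmt6 :
    (∫ x : E2, ((‖x‖^2 - 1)/(1 + ‖x‖^2)^3) * (eta0 x)^3) = -(21 * Real.pi / 4) := by
  calc _ = (2 * π) * ∫ r in Ioi (0 : ℝ), r * radialIntegrand r :=
        integral_fun_norm_euclideanSpace_fin_two radialIntegrand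
    _ = -(21 * π / 4) := by
        rw [integral_Ioi_mul_radialIntegrand]
        ring
end
end

section
/- For the two-dimensional hyperbolic space (Poincaré disk 𝔹² with metric g = (2/(1-|x|²))² g_e), every u ∈ C_c^∞(𝔹²) satisfies ∫_{𝔹²} |∇_{𝔹²} u|² dV_{𝔹²} ≥ (1/4) ∫_{𝔹²} |u|² dV_{𝔹²}. -/
open MeasureTheory Real Topology Filter

noncomputable section

namespace Stmt9Aux

def e (i : Fin 2) : E2 := EuclideanSpace.single i 1

def g (u : E2 → ℝ) (i : Fin 2) (x : E2) : ℝ := u x * (x i * (1 - ‖x‖^2)⁻¹)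

lemma norm_sq_coords (v : E2) : ‖v‖^2 = ∑ i, (v i)^2 := by
  simpa [sq_abs] using PiLp.norm_sq_eq_of_L2 (fun _ : Fin 2 => ℝ) v

lemma proj_contDiff (i : Fin 2) : ContDiff ℝ (⊤ : ℕ∞) (fun y : E2 => (y i : ℝ)) :=
  (EuclideanSpace.proj (𝕜 := ℝ) i).contDiff

lemma fderiv_g_apply (u : E2 → ℝ) (hu : ContDiff ℝ (⊤ : ℕ∞) u) {x : E2} (hx : ‖x‖ < 1) (i : Fin 2) :
    fderiv ℝ (g u i) x (e i) =
      fderiv ℝ u x (e i) * (x i * (1 - ‖x‖^2)⁻¹)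
        + u x * ((1 - ‖x‖^2)⁻¹ + 2 * (x i)^2 * ((1 - ‖x‖^2)⁻¹)^2) := by
  have hne : (1 - ‖x‖^2) ≠ 0 := by nlinarith [norm_nonneg x]
  have hq : HasFDerivAt (fun y : E2 => 1 - ‖y‖^2) (-(2 • (innerSL ℝ x))) x :=
    (hasStrictFDerivAt_norm_sq x).hasFDerivAt.const_sub 1
  have hinv : HasFDerivAt (fun y : E2 => (1 - ‖y‖^2)⁻¹)
      ((-(ContinuousLinearMap.mulLeftRight ℝ ℝ (1 - ‖x‖^2)⁻¹ (1 - ‖x‖^2)⁻¹)).comp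
        (-(2 • (innerSL ℝ x)))) x :=
    (hasFDerivAt_inv' hne).comp x hq
  have hproj : HasFDerivAt (fun y : E2 => (y i : ℝ)) (EuclideanSpace.proj (𝕜 := ℝ) i) x :=
    (EuclideanSpace.proj (𝕜 := ℝ) i).hasFDerivAt
  have hψ := hproj.mul hinv
  have hg : HasFDerivAt (g u i) _ x := ((hu.differentiable (by simp) x).hasFDerivAt).mul hψ
  rw [hg.fderiv]
  fin_cases i <;>
  · simp [e, ContinuousLinearMap.smul_apply, EuclideanSpace.proj, real_inner_comm,
      EuclideanSpace.inner_single_left, EuclideanSpace.inner_single_right]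
    field_simp
    ring

variable {u : E2 → ℝ}

lemma fderiv_zero_of_nmem (hx : x ∉ tsupport u) (v : E2) : fderiv ℝ u x v = 0 := by
  have h : u =ᶠ[𝓝 x] fun _ => 0 := by
    filter_upwards [(isClosed_tsupport u).isOpen_compl.mem_nhds hx] with y hy
    exact image_eq_zero_of_notMem_tsupport hy
  rw [h.fderiv_eq, fderiv_fun_const]
  rfl

lemma g_contDiff (hu : ContDiff ℝ (⊤ : ℕ∞) u)
    (hsupp : tsupport u ⊆ Metric.ball (0 : E2) 1) (i : Fin 2) :
    ContDiff ℝ (⊤ : ℕ∞) (g u i) := by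
  rw [contDiff_iff_contDiffAt]
  intro x
  by_cases hx : x ∈ Metric.ball (0 : E2) 1
  · have hne : (1 - ‖x‖^2) ≠ 0 := by
      have := mem_ball_zero_iff.1 hx
      nlinarith [norm_nonneg x]
    exact hu.contDiffAt.mul (((proj_contDiff i).contDiffAt).mul
      (((contDiffAt_const (c := (1:ℝ))).sub (contDiff_norm_sq ℝ).contDiffAt).inv hne))
  · have hx' : x ∉ tsupport u := fun h => hx (hsupp h)
    have h : g u i =ᶠ[𝓝 x] fun _ => 0 := by
      filter_upwards [(isClosed_tsupport u).isOpen_compl.mem_nhds hx'] with y hy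
      simp [g, image_eq_zero_of_notMem_tsupport hy]
    exact contDiffAt_const.congr_of_eventuallyEq h

/-- helper: continuous + compactly supported, hence integrable -/
lemma cont_aux (hcs : HasCompactSupport u)
    (hsupp : tsupport u ⊆ Metric.ball (0 : E2) 1) {F : E2 → ℝ}
    (hF : ContinuousOn F (Metric.ball (0 : E2) 1))
    (h0 : ∀ x, x ∉ tsupport u → F x = 0) :
    Integrable F (volume : Measure E2) := by
  have hcont : Continuous F := by
    rw [continuous_iff_continuousAt]
    intro x
    by_cases hx : x ∈ Metric.ball (0 : E2) 1
    · exact hF.continuousAt (Metric.isOpen_ball.mem_nhds hx)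
    · have hx' : x ∉ tsupport u := fun h => hx (hsupp h)
      have h : F =ᶠ[𝓝 x] fun _ => (0:ℝ) := by
        filter_upwards [(isClosed_tsupport u).isOpen_compl.mem_nhds hx'] with y hy
        exact h0 y hy
      exact h.continuousAt
  have hsup : HasCompactSupport F := by
    have hsub : tsupport F ⊆ tsupport u := by
      apply closure_minimal ?_ (isClosed_tsupport u)
      intro x hx
      by_contra hx'
      exact hx (h0 x (by simpa using hx'))
    exact IsCompact.of_isClosed_subset hcs (isClosed_tsupport F) hsub
  exact hcont.integrable_of_hasCompactSupport hsup

end Stmt9Aux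

open Stmt9Aux

/-- Poincaré inequality in the Poincaré disk `𝔹²`: for `u ∈ C_c^∞(𝔹²)`,
`∫ |∇_{𝔹²}u|² dV ≥ (1/4) ∫ u² dV`.  By conformal invariance of the Dirichlet
energy in dimension 2, the left-hand side equals the Euclidean Dirichlet
energy `∫_{B₁} |∇u|² dx`, while `dV = (2/(1-|x|²))² dx`. -/
theorem stmt9 (u : E2 → ℝ) (hu : ContDiff ℝ (⊤ : ℕ∞) u) (hcs : HasCompactSupport u)
    (hsupp : tsupport u ⊆ Metric.ball (0 : E2) 1) :
    (∫ x in Metric.ball (0 : E2) 1, ‖gradient u x‖^2)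
      ≥ (1/4) * ∫ x in Metric.ball (0 : E2) 1, (u x)^2 * (2/(1-‖x‖^2))^2 := by
  set B := Metric.ball (0 : E2) 1 with hBdef
  -- the main auxiliary functions
  set fA : E2 → ℝ := fun x => ∑ i, (fderiv ℝ u x (e i))^2 with hfA
  set fB : E2 → ℝ := fun x => u x * ((∑ i, fderiv ℝ u x (e i) * x i) * (1-‖x‖^2)⁻¹) with hfB
  set fC : E2 → ℝ := fun x => (u x)^2 * (‖x‖^2 * ((1-‖x‖^2)⁻¹)^2) with hfC
  set fD : E2 → ℝ := fun x => (u x)^2 * ((1-‖x‖^2)⁻¹)^2 with hfD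
  set fE : E2 → ℝ := fun x => (u x)^2 * ((1-‖x‖^2)⁻¹ + ‖x‖^2 * ((1-‖x‖^2)⁻¹)^2) with hfE
  set fS : E2 → ℝ := fun x => ∑ i, (fderiv ℝ u x (e i) + u x * (1-‖x‖^2)⁻¹ * x i)^2 with hfS
  have hnmem : ∀ x, x ∉ B → u x = 0 := fun x hx =>
    image_eq_zero_of_notMem_tsupport (fun h => hx (hsupp h))
  have hqne : ∀ x ∈ B, (1 - ‖x‖^2) ≠ 0 := by
    intro x hx
    have := mem_ball_zero_iff.1 hx
    nlinarith [norm_nonneg x]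
  -- continuity facts
  have hucont : Continuous u := hu.continuous
  have hfd : ∀ i, Continuous (fun x => fderiv ℝ u x (e i)) := fun i =>
    (hu.continuous_fderiv (by simp)).clm_apply continuous_const
  have hproj : ∀ i : Fin 2, Continuous (fun x : E2 => (x i : ℝ)) := fun i =>
    (EuclideanSpace.proj (𝕜 := ℝ) i).continuous
  have hqinv : ContinuousOn (fun x : E2 => (1-‖x‖^2)⁻¹) B :=
    ContinuousOn.inv₀ ((continuous_const.sub (contDiff_norm_sq (E := E2) ℝ
      (n := (⊤:ℕ∞))).continuous).continuousOn) hqne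
  have hnormsq : Continuous (fun x : E2 => ‖x‖^2) :=
    (contDiff_norm_sq (E := E2) ℝ (n := (⊤:ℕ∞))).continuous
  -- integrability of all the players
  have intA : Integrable fA (volume : Measure E2) := by
    apply cont_aux hcs hsupp
    · exact (continuous_finset_sum _ fun i _ => (hfd i).pow 2).continuousOn
    · intro x hx
      simp [hfA, fderiv_zero_of_nmem hx]
  have intB : Integrable fB (volume : Measure E2) := by
    apply cont_aux hcs hsupp
    · exact (hucont.continuousOn).mul
        (((continuous_finset_sum _ fun i _ => (hfd i).mul (hproj i)).continuousOn).mul hqinv)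
    · intro x hx
      simp [hfB, image_eq_zero_of_notMem_tsupport hx]
  have intC : Integrable fC (volume : Measure E2) := by
    apply cont_aux hcs hsupp
    · exact ((hucont.pow 2).continuousOn).mul
        ((hnormsq.continuousOn).mul (hqinv.pow 2))
    · intro x hx
      simp [hfC, image_eq_zero_of_notMem_tsupport hx]
  have intD : Integrable fD (volume : Measure E2) := by
    apply cont_aux hcs hsupp
    · exact ((hucont.pow 2).continuousOn).mul (hqinv.pow 2)
    · intro x hx
      simp [hfD, image_eq_zero_of_notMem_tsupport hx]
  have intE : Integrable fE (volume : Measure E2) := by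
    apply cont_aux hcs hsupp
    · exact ((hucont.pow 2).continuousOn).mul
        (hqinv.add ((hnormsq.continuousOn).mul (hqinv.pow 2)))
    · intro x hx
      simp [hfE, image_eq_zero_of_notMem_tsupport hx]
  have intS : Integrable fS (volume : Measure E2) := by
    apply cont_aux hcs hsupp
    · apply continuousOn_finset_sum
      intro i _
      exact (((hfd i).continuousOn).add
        (((hucont.continuousOn).mul hqinv).mul ((hproj i).continuousOn))).pow 2
    · intro x hx
      simp [hfS, fderiv_zero_of_nmem hx, image_eq_zero_of_notMem_tsupport hx]
  -- integration by parts, summed over coordinates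
  have hgc : ∀ i, ContDiff ℝ (⊤ : ℕ∞) (g u i) := g_contDiff hu hsupp
  have hgcs : ∀ i, HasCompactSupport (g u i) := fun i => hcs.mul_right
  have ibp : ∀ i : Fin 2,
      ∫ x, u x * fderiv ℝ (g u i) x (e i) = - ∫ x, fderiv ℝ u x (e i) * g u i x := by
    intro i
    apply integral_mul_fderiv_eq_neg_fderiv_mul_of_integrable
    · exact (((hu.continuous_fderiv (by simp)).clm_apply continuous_const).mul
        (hgc i).continuous).integrable_of_hasCompactSupport ((hgcs i).mul_left)
    · exact (hucont.mul (((hgc i).continuous_fderiv (by simp)).clm_apply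
        continuous_const)).integrable_of_hasCompactSupport hcs.mul_right
    · exact (hucont.mul (hgc i).continuous).integrable_of_hasCompactSupport hcs.mul_right
    · exact fun x _ => hu.differentiable (by simp) x
    · exact fun x _ => (hgc i).differentiable (by simp) x
  have intG1 : ∀ i, Integrable (fun x => u x * fderiv ℝ (g u i) x (e i)) (volume : Measure E2) :=
    fun i => (hucont.mul (((hgc i).continuous_fderiv (by simp)).clm_apply
        continuous_const)).integrable_of_hasCompactSupport hcs.mul_right
  have intG2 : ∀ i, Integrable (fun x => fderiv ℝ u x (e i) * g u i x) (volume : Measure E2) :=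
    fun i => (((hu.continuous_fderiv (by simp)).clm_apply continuous_const).mul
        (hgc i).continuous).integrable_of_hasCompactSupport ((hgcs i).mul_left)
  have sum_ibp : ∫ x, ∑ i, u x * fderiv ℝ (g u i) x (e i)
      = - ∫ x, ∑ i, fderiv ℝ u x (e i) * g u i x := by
    rw [integral_finset_sum _ (fun i _ => intG1 i), integral_finset_sum _ (fun i _ => intG2 i),
      ← Finset.sum_neg_distrib]
    exact Finset.sum_congr rfl fun i _ => ibp i
  -- convert both sides to set integrals over B and identify the integrands
  have hL : ∫ x, ∑ i, u x * fderiv ℝ (g u i) x (e i) = ∫ x in B, fB x + 2 * fE x := by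
    rw [← setIntegral_eq_integral_of_forall_compl_eq_zero
      (s := B) (fun x hx => by simp [hnmem x hx])]
    apply setIntegral_congr_fun measurableSet_ball
    intro x hx
    have hx' : ‖x‖ < 1 := mem_ball_zero_iff.1 hx
    have h0 := fderiv_g_apply u hu hx' 0
    have h1 := fderiv_g_apply u hu hx' 1
    simp only [hfB, hfE]
    rw [Fin.sum_univ_two, h0, h1, Fin.sum_univ_two]
    set p := (1 - ‖x‖^2)⁻¹ with hp
    have hn := norm_sq_coords x
    rw [hn, Fin.sum_univ_two]
    ring
  have hR : ∫ x, ∑ i, fderiv ℝ u x (e i) * g u i x = ∫ x in B, fB x := by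
    rw [← setIntegral_eq_integral_of_forall_compl_eq_zero
      (s := B) (fun x hx => by simp [g, hnmem x hx])]
    apply setIntegral_congr_fun measurableSet_ball
    intro x hx
    simp only [hfB, g]
    rw [Fin.sum_univ_two, Fin.sum_univ_two]
    ring
  -- split the LHS integral
  have hsplit : ∫ x in B, fB x + 2 * fE x = (∫ x in B, fB x) + 2 * ∫ x in B, fE x := by
    rw [integral_add intB.integrableOn ((intE.const_mul 2).integrableOn), integral_const_mul]
  have keyBE : (∫ x in B, fB x) = - ∫ x in B, fE x := by
    have := sum_ibp
    rw [hL, hR, hsplit] at this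
    linarith
  -- nonnegativity of the sum of squares
  have hS_nonneg : 0 ≤ ∫ x in B, fS x := by
    apply setIntegral_nonneg measurableSet_ball
    intro x _
    exact Finset.sum_nonneg fun i _ => sq_nonneg _
  have hS_split : ∫ x in B, fS x = (∫ x in B, fA x) + (2 * (∫ x in B, fB x) + ∫ x in B, fC x) := by
    have hcong : ∫ x in B, fS x = ∫ x in B, (fA x + (2 * fB x + fC x)) := by
      apply setIntegral_congr_fun measurableSet_ball
      intro x hx
      dsimp only
      simp only [hfS, hfA, hfB, hfC]
      rw [Fin.sum_univ_two, Fin.sum_univ_two, Fin.sum_univ_two]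
      set p := (1 - ‖x‖^2)⁻¹ with hp
      have hn := norm_sq_coords x
      rw [hn, Fin.sum_univ_two]
      ring
    have h1 : ∫ x in B, (fA x + (2 * fB x + fC x))
        = (∫ x in B, fA x) + ∫ x in B, (2 * fB x + fC x) :=
      integral_add intA.integrableOn ((intB.const_mul 2).add intC).integrableOn
    have h2 : ∫ x in B, (2 * fB x + fC x) = (∫ x in B, 2 * fB x) + ∫ x in B, fC x :=
      integral_add (intB.const_mul 2).integrableOn intC.integrableOn
    rw [hcong, h1, h2, integral_const_mul]
  -- the comparison step
  have hcomp : (∫ x in B, (2 * fE x - fC x)) ≥ ∫ x in B, fD x := by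
    apply setIntegral_mono_on intD.integrableOn
      (((intE.const_mul 2).sub intC).integrableOn) measurableSet_ball
    intro x hx
    have hq : (0:ℝ) < 1 - ‖x‖^2 := by
      have := mem_ball_zero_iff.1 hx
      nlinarith [norm_nonneg x]
    have hqinv_pos : (0:ℝ) ≤ (1 - ‖x‖^2)⁻¹ := le_of_lt (inv_pos.2 hq)
    have hne : (1 - ‖x‖^2) ≠ 0 := ne_of_gt hq
    simp only [Pi.sub_apply, hfD, hfE, hfC]
    have key : 2 * ((u x)^2 * ((1-‖x‖^2)⁻¹ + ‖x‖^2 * ((1-‖x‖^2)⁻¹)^2))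
        - (u x)^2 * (‖x‖^2 * ((1-‖x‖^2)⁻¹)^2) - (u x)^2 * ((1-‖x‖^2)⁻¹)^2
        = (u x)^2 * (1-‖x‖^2)⁻¹ := by
      field_simp
      ring
    linarith [mul_nonneg (sq_nonneg (u x)) hqinv_pos, key]
  have hcomp_split : ∫ x in B, (2 * fE x - fC x)
      = 2 * (∫ x in B, fE x) - ∫ x in B, fC x := by
    rw [integral_sub ((intE.const_mul 2).integrableOn) intC.integrableOn, integral_const_mul]
  -- identify goal LHS and RHS
  have hgoalL : ∫ x in B, ‖gradient u x‖^2 = ∫ x in B, fA x := by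
    apply setIntegral_congr_fun measurableSet_ball
    intro x _
    dsimp only
    rw [norm_sq_coords (gradient u x)]
    simp only [hfA]
    apply Finset.sum_congr rfl
    intro i _
    congr 1
    have h : fderiv ℝ u x (e i) = inner ℝ (gradient u x) (e i : E2) := by
      simp [gradient]
    rw [h, real_inner_comm, e, EuclideanSpace.inner_single_left]
    simp
  have hgoalR : (1/4) * (∫ x in B, (u x)^2 * (2/(1-‖x‖^2))^2) = ∫ x in B, fD x := by
    rw [← integral_const_mul]
    apply setIntegral_congr_fun measurableSet_ball
    intro x _
    simp only [hfD]
    ring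
  rw [ge_iff_le, hgoalR, hgoalL]
  have h1 : (∫ x in B, fA x) + (2 * (∫ x in B, fB x) + ∫ x in B, fC x) ≥ 0 := by
    rw [← hS_split]; exact hS_nonneg
  rw [hcomp_split] at hcomp
  linarith [keyBE, h1, hcomp]
end
end

section
/- Let 𝓛 be the operator 𝓛(φ)(t) = e^t((1-e^{-t})φ')' + 2φ for smooth φ : [0,∞) → ℝ with φ(0) = 0, and let F be smooth. Then φ(t) := ∫₀^t e^{-s} F(s) [ (1-2e^{-t})(1-2e^{-s}) ln((e^t-1)/(e^s-1)) + 4(e^{-s}-e^{-t}) ] ds satisfies 𝓛(φ) = F on (0,∞). -/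
open MeasureTheory Real Set intervalIntegral

noncomputable section

def Prim (f : ℝ → ℝ) : ℝ → ℝ := fun v => ∫ s in (0:ℝ)..v, f s

lemma hasDerivAt_Prim {f : ℝ → ℝ} (hf : Continuous f) (v : ℝ) :
    HasDerivAt (Prim f) (f v) v :=
  integral_hasDerivAt_right (hf.intervalIntegrable _ _)
    (hf.stronglyMeasurableAtFilter _ _) hf.continuousAt

lemma integrableOn_log_Ioc_one : IntegrableOn Real.log (Ioc 0 1) volume := by
  have hcont : ContinuousOn (fun s : ℝ => s - s * Real.log s) (Icc 0 1) :=
    (continuous_id.sub Real.continuous_mul_log).continuousOn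
  have hderiv : ∀ s ∈ Ioo (0:ℝ) 1, HasDerivAt (fun s : ℝ => s - s * Real.log s)
      (-Real.log s) s := by
    intro s hs
    have := (hasDerivAt_id s).sub (Real.hasDerivAt_mul_log (ne_of_gt hs.1))
    exact this.congr_deriv (by ring)
  have hpos : ∀ s ∈ Ioo (0:ℝ) 1, 0 ≤ -Real.log s := by
    intro s hs
    have : Real.log s ≤ 0 := Real.log_nonpos hs.1.le hs.2.le
    linarith
  have := integrableOn_deriv_of_nonneg hcont hderiv hpos
  have h2 : IntegrableOn (fun s => - -Real.log s) (Ioc (0:ℝ) 1) volume := this.neg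
  simpa using h2


lemma integrableOn_log_Ioc (x : ℝ) (hx : 0 < x) :
    IntegrableOn Real.log (Ioc 0 x) volume := by
  rcases le_or_gt x 1 with h1 | h1
  · exact integrableOn_log_Ioc_one.mono_set (Ioc_subset_Ioc le_rfl h1)
  · have hB : IntegrableOn Real.log (Ioc 1 x) volume := by
      have hc : ContinuousOn Real.log (Icc 1 x) := by
        apply Real.continuousOn_log.mono
        intro s hs
        simp only [mem_compl_iff, mem_singleton_iff]
        have h1s : (1:ℝ) ≤ s := hs.1
        intro h; rw [h] at h1s; linarith
      exact (hc.integrableOn_compact isCompact_Icc).mono_set Ioc_subset_Icc_self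
    have := integrableOn_log_Ioc_one.union hB
    exact this.mono_set (by rw [Ioc_union_Ioc_eq_Ioc zero_le_one h1.le])

lemma abs_log_exp_sub_one_le {s x : ℝ} (hs : 0 < s) (hsx : s ≤ x) :
    |Real.log (Real.exp s - 1)| ≤ |Real.log s| + x := by
  have hx : 0 ≤ x := hs.le.trans hsx
  have h1 : s ≤ Real.exp s - 1 := by
    have := Real.add_one_le_exp s; linarith
  have hpos : 0 < Real.exp s - 1 := lt_of_lt_of_le hs h1
  have h2 : Real.exp s - 1 ≤ s * Real.exp x := by
    have hb : -s + 1 ≤ Real.exp (-s) := Real.add_one_le_exp (-s)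
    have hes : 0 < Real.exp s := Real.exp_pos s
    have : Real.exp s * (1 - s) ≤ Real.exp s * Real.exp (-s) := by
      apply mul_le_mul_of_nonneg_left _ hes.le
      linarith
    rw [← Real.exp_add] at this
    simp only [add_neg_cancel, Real.exp_zero] at this
    have hle : Real.exp s ≤ Real.exp x := Real.exp_le_exp.2 hsx
    nlinarith
  rw [abs_le]
  constructor
  · have := Real.log_le_log hs h1
    have habs : -|Real.log s| ≤ Real.log s := neg_abs_le _
    linarith
  · have := Real.log_le_log hpos h2
    rw [Real.log_mul (ne_of_gt hs) (ne_of_gt (Real.exp_pos x)), Real.log_exp] at this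
    have habs : Real.log s ≤ |Real.log s| := le_abs_self _
    linarith

lemma intervalIntegrable_mul_log {g : ℝ → ℝ} (hg : Continuous g) {x : ℝ} (hx : 0 < x) :
    IntervalIntegrable (fun s => g s * Real.log (Real.exp s - 1)) volume 0 x := by
  rw [intervalIntegrable_iff_integrableOn_Ioc_of_le hx.le]
  obtain ⟨C, hC⟩ := (isCompact_Icc (a := (0:ℝ)) (b := x)).exists_bound_of_continuousOn
    hg.continuousOn
  have hC0 : 0 ≤ C := le_trans (norm_nonneg _) (hC 0 (by constructor <;> simp [hx.le]))
  have hdom : IntegrableOn (fun s => C * (|Real.log s| + x)) (Ioc 0 x) volume := by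
    have h1 : IntegrableOn (fun s => |Real.log s|) (Ioc 0 x) volume :=
      (integrableOn_log_Ioc x hx).abs
    exact ((h1.add (integrableOn_const measure_Ioc_lt_top.ne)).const_mul C)
  apply Integrable.mono hdom
  · apply Measurable.aestronglyMeasurable
    exact hg.measurable.mul (Real.measurable_log.comp
      ((Real.continuous_exp.sub continuous_const).measurable))
  · filter_upwards [ae_restrict_mem measurableSet_Ioc] with s hs
    have hbound := abs_log_exp_sub_one_le hs.1 hs.2
    have hgs : |g s| ≤ C := by simpa using hC s ⟨hs.1.le, hs.2⟩
    rw [Real.norm_eq_abs, Real.norm_eq_abs, abs_mul]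
    have hrhs : |C * (|Real.log s| + x)| = C * (|Real.log s| + x) := by
      apply abs_of_nonneg; positivity
    rw [hrhs]
    have : |g s| * |Real.log (Real.exp s - 1)| ≤ C * (|Real.log s| + x) := by
      apply mul_le_mul hgs hbound (abs_nonneg _) hC0
    exact this

set_option maxHeartbeats 1000000 in
lemma hasDerivAt_Prim_log {g : ℝ → ℝ} (hg : Continuous g) {v : ℝ} (hv : 0 < v) :
    HasDerivAt (Prim (fun s => g s * Real.log (Real.exp s - 1)))
      (g v * Real.log (Real.exp v - 1)) v := by
  have hpos : (0:ℝ) < Real.exp v - 1 := by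
    have := Real.add_one_le_exp v; linarith
  have hm : Measurable fun s => g s * Real.log (Real.exp s - 1) :=
    hg.measurable.mul (Real.measurable_log.comp
      ((Real.continuous_exp.sub continuous_const).measurable))
  have hca : ContinuousAt (fun s => g s * Real.log (Real.exp s - 1)) v :=
    hg.continuousAt.mul (ContinuousAt.log
      ((Real.continuous_exp.sub continuous_const).continuousAt) (ne_of_gt hpos))
  exact integral_hasDerivAt_right (intervalIntegrable_mul_log hg hv)
    ⟨Set.univ, Filter.univ_mem, hm.aestronglyMeasurable.restrict⟩ hca

set_option maxHeartbeats 1000000 in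
/-- Representation formula for `𝓛(φ) = e^t((1-e^{-t})φ')' + 2φ = F` with
`φ(0) = 0`, via variation of parameters. -/
theorem stmt13 (F φ : ℝ → ℝ) (hF : ContDiff ℝ (⊤ : ℕ∞) F)
    (hφ : ∀ t : ℝ, φ t =
      ∫ s in (0:ℝ)..t, Real.exp (-s) * F s *
        ((1 - 2*Real.exp (-t)) * (1 - 2*Real.exp (-s)) *
            Real.log ((Real.exp t - 1)/(Real.exp s - 1))
          + 4*(Real.exp (-s) - Real.exp (-t)))) :
    ∀ t : ℝ, 0 < t →
      Real.exp t * deriv (fun v => (1 - Real.exp (-v)) * deriv φ v) t + 2 * φ t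
        = F t := by
  intro t ht
  have hFc : Continuous F := hF.continuous
  set f1 : ℝ → ℝ := fun s => Real.exp (-s) * F s * (1 - 2*Real.exp (-s)) with hf1
  set f2 : ℝ → ℝ :=
    fun s => (Real.exp (-s) * F s * (1 - 2*Real.exp (-s))) * Real.log (Real.exp s - 1) with hf2
  set f3 : ℝ → ℝ := fun s => Real.exp (-s) * (Real.exp (-s) * F s) with hf3
  set f4 : ℝ → ℝ := fun s => Real.exp (-s) * F s with hf4
  have hgc : Continuous (fun s => Real.exp (-s) * F s * (1 - 2*Real.exp (-s))) := by fun_prop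
  have hc1 : Continuous f1 := by rw [hf1]; fun_prop
  have hc3 : Continuous f3 := by rw [hf3]; fun_prop
  have hc4 : Continuous f4 := by rw [hf4]; fun_prop
  have hP1 : ∀ v : ℝ, HasDerivAt (Prim f1) (f1 v) v := hasDerivAt_Prim hc1
  have hP3 : ∀ v : ℝ, HasDerivAt (Prim f3) (f3 v) v := hasDerivAt_Prim hc3
  have hP4 : ∀ v : ℝ, HasDerivAt (Prim f4) (f4 v) v := hasDerivAt_Prim hc4
  have hP2 : ∀ v : ℝ, 0 < v → HasDerivAt (Prim f2) (f2 v) v := by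
    intro v hv
    have := hasDerivAt_Prim_log hgc hv
    rw [hf2]
    exact this
  -- representation of φ
  have hrep : ∀ v : ℝ, 0 < v → φ v =
      ((1 - 2*Real.exp (-v)) * Real.log (Real.exp v - 1)) * Prim f1 v
        - (1 - 2*Real.exp (-v)) * Prim f2 v + 4 * Prim f3 v
        - (4*Real.exp (-v)) * Prim f4 v := by
    intro v hv
    have hint1 : IntervalIntegrable f1 volume 0 v := hc1.intervalIntegrable _ _
    have hint2 : IntervalIntegrable f2 volume 0 v := by
      rw [hf2]; exact intervalIntegrable_mul_log hgc hv
    have hint3 : IntervalIntegrable f3 volume 0 v := hc3.intervalIntegrable _ _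
    have hint4 : IntervalIntegrable f4 volume 0 v := hc4.intervalIntegrable _ _
    rw [hφ v]
    have hcong : (∫ s in (0:ℝ)..v, Real.exp (-s) * F s *
        ((1 - 2*Real.exp (-v)) * (1 - 2*Real.exp (-s)) *
            Real.log ((Real.exp v - 1)/(Real.exp s - 1))
          + 4*(Real.exp (-s) - Real.exp (-v))))
        = ∫ s in (0:ℝ)..v,
          (((1 - 2*Real.exp (-v)) * Real.log (Real.exp v - 1)) * f1 s
            - (1 - 2*Real.exp (-v)) * f2 s + 4 * f3 s - (4*Real.exp (-v)) * f4 s) := by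
      apply intervalIntegral.integral_congr_ae
      apply Filter.Eventually.of_forall
      intro s hs
      rw [Set.uIoc_of_le hv.le] at hs
      have hs0 : (0:ℝ) < s := hs.1
      have h1 : (0:ℝ) < Real.exp s - 1 := by
        have := Real.add_one_le_exp s; nlinarith [Real.add_one_le_exp s, hs0]
      have h2 : (0:ℝ) < Real.exp v - 1 := by
        nlinarith [Real.add_one_le_exp v, hv]
      rw [Real.log_div (ne_of_gt h2) (ne_of_gt h1)]
      simp only [hf1, hf2, hf3, hf4]
      ring
    rw [hcong]
    rw [intervalIntegral.integral_sub
        (((hint1.const_mul _).sub (hint2.const_mul _)).add (hint3.const_mul 4))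
        (hint4.const_mul _),
      intervalIntegral.integral_add
        ((hint1.const_mul _).sub (hint2.const_mul _)) (hint3.const_mul 4),
      intervalIntegral.integral_sub (hint1.const_mul _) (hint2.const_mul _),
      intervalIntegral.integral_const_mul, intervalIntegral.integral_const_mul,
      intervalIntegral.integral_const_mul, intervalIntegral.integral_const_mul]
    rfl
  -- derivative of φ on (0,∞)
  have hφ' : ∀ v : ℝ, 0 < v → HasDerivAt φ
      ((2*Real.exp (-v)*Real.log (Real.exp v - 1)
          + (1 - 2*Real.exp (-v)) * (Real.exp v/(Real.exp v - 1))) * Prim f1 v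
        - 2*Real.exp (-v) * Prim f2 v + 4*Real.exp (-v) * Prim f4 v) v := by
    intro v hv
    have h2 : (0:ℝ) < Real.exp v - 1 := by nlinarith [Real.add_one_le_exp v, hv]
    have hexp : HasDerivAt (fun w : ℝ => Real.exp (-w)) (-Real.exp (-v)) v := by
      have h := (hasDerivAt_id v).neg.exp
      exact h.congr_deriv (by simp [Pi.neg_apply])
    have hb : HasDerivAt (fun w : ℝ => 1 - 2*Real.exp (-w)) (2*Real.exp (-v)) v := by
      have h := (hexp.const_mul 2).const_sub 1
      exact h.congr_deriv (by ring)
    have hL : HasDerivAt (fun w : ℝ => Real.log (Real.exp w - 1))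
        (Real.exp v/(Real.exp v - 1)) v :=
      HasDerivAt.log ((Real.hasDerivAt_exp v).sub_const 1) (ne_of_gt h2)
    have hG := ((((hb.mul hL).mul (hP1 v)).sub (hb.mul (hP2 v hv))).add
        ((hP3 v).const_mul 4)).sub ((hexp.const_mul 4).mul (hP4 v))
    have heq : φ =ᶠ[nhds v] (fun w =>
        ((1 - 2*Real.exp (-w)) * Real.log (Real.exp w - 1)) * Prim f1 w
          - (1 - 2*Real.exp (-w)) * Prim f2 w + 4 * Prim f3 w
          - (4*Real.exp (-w)) * Prim f4 w) :=
      Filter.eventuallyEq_of_mem (isOpen_Ioi.mem_nhds hv) (fun w hw => hrep w hw)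
    have hφG := hG.congr_of_eventuallyEq heq
    refine hφG.congr_deriv ?_
    simp only [hf1, hf2, hf3, hf4, Pi.mul_apply, Pi.add_apply, Pi.sub_apply]
    ring
  have hderiv : ∀ v ∈ Set.Ioi (0:ℝ), deriv φ v =
      (2*Real.exp (-v)*Real.log (Real.exp v - 1)
          + (1 - 2*Real.exp (-v)) * (Real.exp v/(Real.exp v - 1))) * Prim f1 v
        - 2*Real.exp (-v) * Prim f2 v + 4*Real.exp (-v) * Prim f4 v :=
    fun v hv => (hφ' v hv).deriv
  have hWeq : (fun w => (1 - Real.exp (-w)) * deriv φ w) =ᶠ[nhds t]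
      (fun w => (1 - Real.exp (-w)) *
        ((2*Real.exp (-w)*Real.log (Real.exp w - 1)
            + (1 - 2*Real.exp (-w)) * (Real.exp w/(Real.exp w - 1))) * Prim f1 w
          - 2*Real.exp (-w) * Prim f2 w + 4*Real.exp (-w) * Prim f4 w)) :=
    Filter.eventuallyEq_of_mem (isOpen_Ioi.mem_nhds ht)
      (fun w hw => by rw [hderiv w hw])
  have h2t : (0:ℝ) < Real.exp t - 1 := by nlinarith [Real.add_one_le_exp t, ht]
  have hexp : HasDerivAt (fun w : ℝ => Real.exp (-w)) (-Real.exp (-t)) t := by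
    have h := (hasDerivAt_id t).neg.exp
    exact h.congr_deriv (by simp [Pi.neg_apply])
  have hb : HasDerivAt (fun w : ℝ => 1 - 2*Real.exp (-w)) (2*Real.exp (-t)) t := by
    have h := (hexp.const_mul 2).const_sub 1
    exact h.congr_deriv (by ring)
  have hL : HasDerivAt (fun w : ℝ => Real.log (Real.exp w - 1))
      (Real.exp t/(Real.exp t - 1)) t :=
    HasDerivAt.log ((Real.hasDerivAt_exp t).sub_const 1) (ne_of_gt h2t)
  have hQ : HasDerivAt (fun w : ℝ => Real.exp w/(Real.exp w - 1))
      ((Real.exp t * (Real.exp t - 1) - Real.exp t * Real.exp t)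
        / (Real.exp t - 1)^2) t :=
    (Real.hasDerivAt_exp t).div ((Real.hasDerivAt_exp t).sub_const 1) (ne_of_gt h2t)
  have hA := ((hexp.const_mul 2).mul hL).add (hb.mul hQ)
  have houter := (hexp.const_sub 1).mul
    (((hA.mul (hP1 t)).sub ((hexp.const_mul 2).mul (hP2 t ht))).add
      ((hexp.const_mul 4).mul (hP4 t)))
  -- relation between the integrals
  have hrel : Prim f1 t + 2 * Prim f3 t - Prim f4 t = 0 := by
    have hint1 : IntervalIntegrable f1 volume 0 t := hc1.intervalIntegrable _ _
    have hint3 : IntervalIntegrable f3 volume 0 t := hc3.intervalIntegrable _ _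
    have hint4 : IntervalIntegrable f4 volume 0 t := hc4.intervalIntegrable _ _
    have key : Prim f1 t + 2 * Prim f3 t - Prim f4 t
        = ∫ s in (0:ℝ)..t, (f1 s + 2 * f3 s - f4 s) := by
      rw [intervalIntegral.integral_sub (hint1.add (hint3.const_mul 2)) hint4,
        intervalIntegral.integral_add hint1 (hint3.const_mul 2),
        intervalIntegral.integral_const_mul]
      rfl
    rw [key]
    have hz : (fun s => f1 s + 2 * f3 s - f4 s) = fun _ : ℝ => (0:ℝ) := by
      funext s
      simp only [hf1, hf3, hf4]
      ring
    rw [intervalIntegral.integral_congr (fun s _ => congrFun hz s)]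
    simp
  rw [Filter.EventuallyEq.deriv_eq hWeq]
  erw [houter.deriv]
  rw [hrep t ht]
  have het : Real.exp t * Real.exp (-t) = 1 := by
    rw [← Real.exp_add]; simp
  have hv1 : f1 t = Real.exp (-t) * F t * (1 - 2*Real.exp (-t)) := by simp only [hf1]
  have hv2 : f2 t = Real.exp (-t) * F t * (1 - 2*Real.exp (-t)) * Real.log (Real.exp t - 1) := by
    simp only [hf2]
  have hv4 : f4 t = Real.exp (-t) * F t := by simp only [hf4]
  have h3 : Prim f3 t = (Prim f4 t - Prim f1 t)/2 := by linarith
  rw [hv1, hv2, hv4, h3]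
  simp only [Real.exp_neg, Pi.mul_apply, Pi.add_apply, Pi.sub_apply]
  have hne : Real.exp t ≠ 0 := (Real.exp_pos t).ne'
  field_simp
  ring
end
end

section
/- Every bounded C² radial solution v of -Δv = 8e^{2η₀} v on ℝ² with finite Dirichlet energy ∫_{ℝ²}|∇v|² dx < ∞ is of the form v(x) = α·(1-|x|²)/(1+|x|²) for some constant α ∈ ℝ. -/
open MeasureTheory Real

noncomputable section

/-!
Writing `v x = g ‖x‖`, the equation becomes `(r g')' + 8 r (1 + r²)⁻² g = 0` on `(0, ∞)`. Its
solution space is spanned by `φ = (1 - r²)/(1 + r²)` and `ψ = φ log r + 1`, normalised by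
`r W(φ, ψ) = 1`, so `g = r W(g, ψ) φ - r W(g, φ) ψ`. By Abel's identity both coefficients are
constant; the second tends to `0` at `r = 0` because `g` is `C²` there, so `g` is a multiple of `φ`.
-/

open Set Filter Topology

def wronskian (f g : ℝ → ℝ) (x : ℝ) : ℝ := f x * deriv g x - deriv f x * g x

theorem mul_wronskian_eq (f g h : ℝ → ℝ) (x : ℝ) :
    f x * wronskian g h x = wronskian f h x * g x - wronskian f g x * h x := by
  unfold wronskian
  ring

theorem hasDerivAt_mul_wronskian {q f g : ℝ → ℝ} {r : ℝ}
    (hf : DifferentiableAt ℝ f r) (hf' : DifferentiableAt ℝ (deriv f) r)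
    (hg : DifferentiableAt ℝ g r) (hg' : DifferentiableAt ℝ (deriv g) r)
    (hfq : r * deriv (deriv f) r + deriv f r + r * q r * f r = 0)
    (hgq : r * deriv (deriv g) r + deriv g r + r * q r * g r = 0) :
    HasDerivAt (fun s => s * wronskian f g s) 0 r := by
  refine ((hasDerivAt_id' r).fun_mul ((hf.hasDerivAt.fun_mul hg'.hasDerivAt).fun_sub
    (hf'.hasDerivAt.fun_mul hg.hasDerivAt))).congr_deriv ?_
  linear_combination f r * hgq - g r * hfq

theorem exists_forall_Ioi_eq_of_hasDerivAt_zero {f : ℝ → ℝ} {a : ℝ}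
    (hf : ∀ x ∈ Ioi a, HasDerivAt f 0 x) : ∃ c, ∀ x ∈ Ioi a, f x = c :=
  isOpen_Ioi.exists_is_const_of_deriv_eq_zero isPreconnected_Ioi
    (fun x hx => (hf x hx).differentiableAt.differentiableWithinAt) (fun x hx => (hf x hx).deriv)

theorem wronskian_eq_zero_of_contDiff {q f g : ℝ → ℝ} (hf : ContDiff ℝ 2 f) (hg : ContDiff ℝ 2 g)
    (hfq : ∀ r > 0, r * deriv (deriv f) r + deriv f r + r * q r * f r = 0)
    (hgq : ∀ r > 0, r * deriv (deriv g) r + deriv g r + r * q r * g r = 0) {r : ℝ} (hr : 0 < r) :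
    wronskian f g r = 0 := by
  obtain ⟨c, hc⟩ := exists_forall_Ioi_eq_of_hasDerivAt_zero fun s (hs : 0 < s) =>
    hasDerivAt_mul_wronskian (hf.differentiable two_ne_zero s) (hf.differentiable_deriv_two s)
      (hg.differentiable two_ne_zero s) (hg.differentiable_deriv_two s) (hfq s hs) (hgq s hs)
  have hcont : Continuous fun s => s * wronskian f g s :=
    continuous_id.mul ((hf.continuous.mul (hg.continuous_deriv one_le_two)).sub
      ((hf.continuous_deriv one_le_two).mul hg.continuous))
  have hc0 : c = 0 := by
    have h0 : (0 : ℝ) ∈ closure (Ioi 0) := by simp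
    simpa using (Set.EqOn.closure hc hcont continuous_const h0).symm
  simpa [hc0, hr.ne'] using hc r hr

/-- `∂_λ` at `λ = 1` of the family of bubbles `η₀(λ x) + log λ`, in the radial variable. -/
def radialKernel (r : ℝ) : ℝ := (1 - r ^ 2) / (1 + r ^ 2)

def singularRadialKernel (r : ℝ) : ℝ := radialKernel r * log r + 1

theorem contDiff_radialKernel : ContDiff ℝ 2 radialKernel :=
  (contDiff_const.sub (contDiff_id.pow 2)).div (contDiff_const.add (contDiff_id.pow 2))
    fun r => by positivity

theorem deriv_radialKernel : deriv radialKernel = fun r => -4 * r / (1 + r ^ 2) ^ 2 := by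
  funext r
  have h1 : HasDerivAt (fun r : ℝ => 1 - r ^ 2) (-(2 * r)) r := by
    simpa using (hasDerivAt_pow 2 r).const_sub 1
  have h2 : HasDerivAt (fun r : ℝ => 1 + r ^ 2) (2 * r) r := by
    simpa using (hasDerivAt_pow 2 r).const_add 1
  exact ((h1.fun_div h2 (by positivity)).congr_deriv (by field_simp; ring)).deriv

theorem deriv_deriv_radialKernel :
    deriv (deriv radialKernel) = fun r => (12 * r ^ 2 - 4) / (1 + r ^ 2) ^ 3 := by
  funext r
  have h1 : HasDerivAt (fun r : ℝ => -4 * r) (-4) r := by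
    simpa using (hasDerivAt_id r).const_mul (-4 : ℝ)
  have h2 : HasDerivAt (fun r : ℝ => (1 + r ^ 2) ^ 2) (2 * (1 + r ^ 2) * (2 * r)) r := by
    simpa using ((hasDerivAt_pow 2 r).const_add 1).fun_pow 2
  rw [deriv_radialKernel]
  exact ((h1.fun_div h2 (by positivity)).congr_deriv (by field_simp; ring)).deriv

theorem radialKernel_ode (r : ℝ) :
    r * deriv (deriv radialKernel) r + deriv radialKernel r
      + r * (8 / (1 + r ^ 2) ^ 2) * radialKernel r = 0 := by
  rw [deriv_deriv_radialKernel, deriv_radialKernel, radialKernel]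
  field_simp
  ring

theorem hasDerivAt_singularRadialKernel {r : ℝ} (hr : r ≠ 0) :
    HasDerivAt singularRadialKernel (deriv radialKernel r * log r + radialKernel r / r) r := by
  have := ((contDiff_radialKernel.differentiable two_ne_zero r).hasDerivAt.fun_mul
    (hasDerivAt_log hr)).add_const 1
  exact this.congr_deriv (by field_simp)

theorem hasDerivAt_deriv_singularRadialKernel {r : ℝ} (hr : r ≠ 0) :
    HasDerivAt (deriv singularRadialKernel)
      (deriv (deriv radialKernel) r * log r + 2 * deriv radialKernel r / r
        - radialKernel r / r ^ 2) r := by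
  have hφ := contDiff_radialKernel.differentiable two_ne_zero r
  have hφ' := contDiff_radialKernel.differentiable_deriv_two r
  have heq : deriv singularRadialKernel =ᶠ[𝓝 r]
      fun s => deriv radialKernel s * log s + radialKernel s / s :=
    (eventually_ne_nhds hr).mono fun s hs => (hasDerivAt_singularRadialKernel hs).deriv
  refine HasDerivAt.congr_of_eventuallyEq ?_ heq
  refine ((hφ'.hasDerivAt.fun_mul (hasDerivAt_log hr)).fun_add
    (hφ.hasDerivAt.fun_div (hasDerivAt_id' r) hr)).congr_deriv ?_
  field_simp
  ring

theorem singularRadialKernel_ode {r : ℝ} (hr : r ≠ 0) :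
    r * deriv (deriv singularRadialKernel) r + deriv singularRadialKernel r
      + r * (8 / (1 + r ^ 2) ^ 2) * singularRadialKernel r = 0 := by
  rw [(hasDerivAt_deriv_singularRadialKernel hr).deriv, (hasDerivAt_singularRadialKernel hr).deriv,
    singularRadialKernel, deriv_deriv_radialKernel, deriv_radialKernel, radialKernel]
  field_simp
  ring

theorem mul_wronskian_radialKernel_singularRadialKernel {r : ℝ} (hr : r ≠ 0) :
    r * wronskian radialKernel singularRadialKernel r = 1 := by
  rw [wronskian, (hasDerivAt_singularRadialKernel hr).deriv, singularRadialKernel,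
    deriv_radialKernel, radialKernel]
  field_simp
  ring

theorem eq_mul_radialKernel_of_ode {g : ℝ → ℝ} (hg : ContDiff ℝ 2 g)
    (hode : ∀ r > 0, r * deriv (deriv g) r + deriv g r + r * (8 / (1 + r ^ 2) ^ 2) * g r = 0) :
    ∃ α, ∀ r ≥ 0, g r = α * radialKernel r := by
  have hreg : ∀ r > 0, wronskian g radialKernel r = 0 := fun r hr =>
    wronskian_eq_zero_of_contDiff hg contDiff_radialKernel hode (fun r _ => radialKernel_ode r) hr
  obtain ⟨α, hα⟩ := exists_forall_Ioi_eq_of_hasDerivAt_zero fun r (hr : 0 < r) =>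
    hasDerivAt_mul_wronskian (q := fun r => 8 / (1 + r ^ 2) ^ 2)
      (hg.differentiable two_ne_zero r) (hg.differentiable_deriv_two r)
      (hasDerivAt_singularRadialKernel hr.ne').differentiableAt
      (hasDerivAt_deriv_singularRadialKernel hr.ne').differentiableAt
      (hode r hr) (singularRadialKernel_ode hr.ne')
  have hpos : EqOn g (fun r => α * radialKernel r) (Ioi 0) := fun r (hr : 0 < r) => by
    calc g r = g r * (r * wronskian radialKernel singularRadialKernel r) := by
          rw [mul_wronskian_radialKernel_singularRadialKernel hr.ne', mul_one]
      _ = r * wronskian g singularRadialKernel r * radialKernel r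
            - r * wronskian g radialKernel r * singularRadialKernel r := by
          linear_combination r * mul_wronskian_eq g radialKernel singularRadialKernel r
      _ = α * radialKernel r := by rw [hα r hr, hreg r hr]; ring
  exact ⟨α, fun r hr => hpos.closure hg.continuous
    (continuous_const.mul contDiff_radialKernel.continuous) (by simpa using hr)⟩

theorem norm_smul_single (t : ℝ) : ‖t • EuclideanSpace.single (0 : Fin 2) (1 : ℝ)‖ = |t| := by
  rw [norm_smul, PiLp.norm_single, norm_one, mul_one, norm_eq_abs]

theorem norm_smul_single_add_smul_single (r t : ℝ) :
    ‖r • EuclideanSpace.single (0 : Fin 2) (1 : ℝ) + t • EuclideanSpace.single 1 1‖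
      = √(r ^ 2 + t ^ 2) := by
  simp [EuclideanSpace.norm_eq, Fin.sum_univ_two]

theorem deriv_deriv_comp_sqrt {g : ℝ → ℝ} (hg : ContDiff ℝ 2 g) {r : ℝ} (hr : 0 < r) :
    deriv (deriv fun t => g √(r ^ 2 + t ^ 2)) 0 = deriv g r / r := by
  have hs : ∀ t, HasDerivAt (fun t => √(r ^ 2 + t ^ 2)) (t / √(r ^ 2 + t ^ 2)) t := fun t =>
    (((hasDerivAt_pow 2 t).const_add (r ^ 2)).sqrt (by positivity)).congr_deriv
      (by field_simp; norm_num)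
  have hderiv : deriv (fun t => g √(r ^ 2 + t ^ 2))
      = fun t => deriv g √(r ^ 2 + t ^ 2) * (t / √(r ^ 2 + t ^ 2)) :=
    funext fun t => ((hg.differentiable two_ne_zero _).hasDerivAt.comp t (hs t)).deriv
  rw [hderiv]
  refine (((hg.differentiable_deriv_two _).hasDerivAt.comp 0 (hs 0)).fun_mul
    ((hasDerivAt_id' 0).fun_div (hs 0) (by positivity))).deriv.trans ?_
  simp [sqrt_sq hr.le, field]

theorem lap_comp_norm {g : ℝ → ℝ} (hg : ContDiff ℝ 2 g) (heven : ∀ t, g (-t) = g t) {r : ℝ}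
    (hr : 0 < r) :
    lap (fun x => g ‖x‖) (r • EuclideanSpace.single 0 1) = deriv (deriv g) r + deriv g r / r := by
  have habs (t : ℝ) : g |t| = g t := by
    rcases abs_choice t with h | h <;> simp only [h, heven]
  have hline : (fun t : ℝ => g ‖r • EuclideanSpace.single (0 : Fin 2) (1 : ℝ)
      + t • EuclideanSpace.single 0 1‖) = fun t => g (r + t) := by
    funext t
    rw [← add_smul, norm_smul_single, habs]
  have hderiv : deriv (fun t => g (r + t)) = fun t => deriv g (r + t) :=
    funext fun t => deriv_comp_const_add g r t
  rw [lap, Fin.sum_univ_two, hline, hderiv, deriv_comp_const_add, add_zero]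
  simp only [norm_smul_single_add_smul_single, deriv_deriv_comp_sqrt hg hr]

theorem exp_two_mul_eta0 (x : E2) : exp (2 * eta0 x) = 1 / (1 + ‖x‖ ^ 2) ^ 2 := by
  rw [eta0, mul_neg, exp_neg, ← log_rpow (by positivity), exp_log (by positivity)]
  norm_num

theorem stmt15_general (v : E2 → ℝ) (hv : ContDiff ℝ 2 v)
    (hrad : ∀ x y : E2, ‖x‖ = ‖y‖ → v x = v y)
    (hpde : ∀ x : E2, -lap v x = 8 * Real.exp (2 * eta0 x) * v x) :
    ∃ α : ℝ, ∀ x : E2, v x = α * (1 - ‖x‖^2)/(1 + ‖x‖^2) := by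
  set g : ℝ → ℝ := fun t => v (t • EuclideanSpace.single 0 1)
  have hg : ContDiff ℝ 2 g := hv.comp (contDiff_id.smul contDiff_const)
  have hvg : v = fun x => g ‖x‖ :=
    funext fun x => hrad _ _ (by rw [norm_smul_single, abs_norm])
  have heven (t : ℝ) : g (-t) = g t :=
    hrad _ _ (by rw [norm_smul_single, norm_smul_single, abs_neg])
  have hode : ∀ r > 0, r * deriv (deriv g) r + deriv g r + r * (8 / (1 + r ^ 2) ^ 2) * g r = 0 := by
    intro r hr
    have h := hpde (r • EuclideanSpace.single 0 1)
    rw [hvg, lap_comp_norm hg heven hr] at h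
    simp only [exp_two_mul_eta0, norm_smul_single, abs_of_pos hr] at h
    field_simp at h ⊢
    linear_combination -h
  obtain ⟨α, hα⟩ := eq_mul_radialKernel_of_ode hg hode
  refine ⟨α, fun x => ?_⟩
  rw [congrFun hvg x, hα _ (norm_nonneg x), radialKernel, mul_div_assoc]

/-- Classification of bounded radial solutions with finite Dirichlet energy of
the linearized Liouville equation `-Δv = 8e^{2η₀}v` on `ℝ²`. -/
theorem stmt15 (v : E2 → ℝ) (hv : ContDiff ℝ 2 v)
    (hbdd : ∃ C : ℝ, ∀ x : E2, |v x| ≤ C)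
    (hrad : ∀ x y : E2, ‖x‖ = ‖y‖ → v x = v y)
    (hpde : ∀ x : E2, -lap v x = 8 * Real.exp (2 * eta0 x) * v x)
    (hdir : Integrable (fun x : E2 => ‖gradient v x‖^2)) :
    ∃ α : ℝ, ∀ x : E2, v x = α * (1 - ‖x‖^2)/(1 + ‖x‖^2) :=
  stmt15_general v hv hrad hpde
end
end
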